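/- arXiv:2210.16429 — 4 statements merged into one kernel-verified Lean document; each statement's English description precedes it below -/
import Mathlib

section
/- For σ > 0, b > 0, t > 0, d ≥ 1, and an integer R, the measure of the ball B_d(R) under the probability density ρ_d(t,·) equals exp(−σt p^{(−R+1)b}) + p^{dR} Σ_{j ≤ −R} (exp(−σt p^{jb}) − exp(−σt p^{(j+1)b})) p^{dj}. -/
/-! The density is a series `Σ_r c_r 1_{B_d(-r)}` of indicators of balls, so its integral over
`B_d(R)` is `Σ_r c_r μ(B_d(min(-r, R)))`. The Haar measure of `B_d(n)` is `p^{dn}` because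
`B_d(n + 1)` is the disjoint union of the `p^d` translates of `B_d(n)` by the vectors of leading
`p`-adic digits. Hence the terms with `r > -R` reduce to `e^{-σt p^{rb}} - e^{-σt p^{(r+1)b}}` and
telescope to `e^{-σt p^{(-R+1)b}}`, while those with `r ≤ -R` give the remaining series;
summability comes from `r ↦ e^{-σt p^{rb}}` being antitone and bounded. -/

open MeasureTheory Metric Real

noncomputable instance (p : ℕ) [Fact p.Prime] : MeasurableSpace ℚ_[p] := borel _
instance (p : ℕ) [Fact p.Prime] : BorelSpace ℚ_[p] := ⟨rfl⟩

/-- The density of the max-norm `p`-adic Brownian motion at time `t`: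
`ρ_d(t,x) = Σ_{r∈ℤ} (e^{−σt p^{rb}} − e^{−σt p^{(r+1)b}}) p^{dr} 1_{B_d(−r)}(x)`. -/
noncomputable def rho (p : ℕ) [Fact p.Prime] (σ b : ℝ) (d : ℕ) (t : ℝ)
    (x : Fin d → ℚ_[p]) : ℝ :=
  ∑' r : ℤ,
    (Real.exp (-(σ * t * (p : ℝ) ^ ((r : ℝ) * b))) -
        Real.exp (-(σ * t * (p : ℝ) ^ (((r : ℝ) + 1) * b)))) *
      (p : ℝ) ^ ((d : ℤ) * r) *
      Set.indicator (closedBall (0 : Fin d → ℚ_[p]) ((p : ℝ) ^ (-r)))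
        (fun _ => (1 : ℝ)) x

open Filter Topology

theorem Antitone.hasSum_sub_succ {u : ℕ → ℝ} (hu : Antitone u) {l : ℝ}
    (h : Tendsto u atTop (𝓝 l)) : HasSum (fun n => u n - u (n + 1)) (u 0 - l) := by
  rw [hasSum_iff_tendsto_nat_of_nonneg fun n => sub_nonneg.2 (hu n.le_succ)]
  simpa only [Finset.sum_range_sub'] using tendsto_const_nhds.sub h

theorem Antitone.summable_int_sub_succ {E : ℤ → ℝ} (hE : Antitone E)
    (hbot : BddBelow (Set.range E)) (htop : BddAbove (Set.range E)) :
    Summable fun r => E r - E (r + 1) := by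
  rw [summable_int_iff_summable_nat_and_neg]
  constructor
  · have hu : Antitone fun n : ℕ => E n := hE.comp_monotone Nat.mono_cast
    have hbdd : BddBelow (Set.range fun n : ℕ => E n) :=
      hbot.mono (Set.range_comp_subset_range _ _)
    simpa only [Int.natCast_add, Int.natCast_one] using
      (hu.hasSum_sub_succ (tendsto_atTop_ciInf hu hbdd)).summable
  · have hu : Antitone fun n : ℕ => -E (1 - n) :=
      fun m n hmn => neg_le_neg (hE (by omega))
    have hbdd : BddBelow (Set.range fun n : ℕ => -E (1 - n)) := by
      obtain ⟨M, hM⟩ := htop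
      exact ⟨-M, by rintro _ ⟨n, rfl⟩; exact neg_le_neg (hM ⟨_, rfl⟩)⟩
    refine (hu.hasSum_sub_succ (tendsto_atTop_ciInf hu hbdd)).summable.congr fun n => ?_
    rw [show (1 : ℤ) - (n + 1 : ℕ) = -n by push_cast; ring, show (1 : ℤ) - n = -n + 1 by ring]
    ring

theorem Antitone.hasSum_indicator_Ioi_sub_succ {E : ℤ → ℝ} (hE : Antitone E)
    (h : Tendsto E atTop (𝓝 0)) (m : ℤ) :
    HasSum ((Set.Ioi m).indicator fun r => E r - E (r + 1)) (E (m + 1)) := by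
  have hu : Antitone fun n : ℕ => E (m + 1 + n) := fun a b hab => hE (by omega)
  have hlim : Tendsto (fun n : ℕ => E (m + 1 + n)) atTop (𝓝 0) :=
    h.comp (tendsto_atTop_add_const_left _ _ tendsto_natCast_atTop_atTop)
  have hinj : Function.Injective fun n : ℕ => m + 1 + n := fun a b hab => by
    simpa using hab
  rw [← hinj.hasSum_iff]
  · convert hu.hasSum_sub_succ hlim using 1
    · ext n
      rw [Function.comp_apply, Set.indicator_of_mem (Set.mem_Ioi.2 (by omega : m < m + 1 + n))]
      push_cast
      ring_nf
    · simp
  · intro r hr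
    refine Set.indicator_of_notMem (fun hmr => hr ⟨(r - m - 1).toNat, ?_⟩) _
    simp only [Set.mem_Ioi] at hmr
    show m + 1 + ((r - m - 1).toNat : ℤ) = r
    omega

theorem hasSum_sub_succ_mul_zpow_mul_zpow_min {E : ℤ → ℝ} (hE : Antitone E)
    (hbdd : BddAbove (Set.range E)) (hlim : Tendsto E atTop (𝓝 0)) {q : ℝ} (hq : 1 ≤ q)
    (d : ℕ) (R : ℤ) :
    HasSum (fun r : ℤ => (E r - E (r + 1)) * q ^ ((d : ℤ) * r) * q ^ ((d : ℤ) * min (-r) R))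
      (E (-R + 1) + q ^ ((d : ℤ) * R) *
        ∑' j : {j : ℤ // j ≤ -R}, (E j - E (j + 1)) * q ^ ((d : ℤ) * j)) := by
  have hq0 : q ≠ 0 := (zero_lt_one.trans_le hq).ne'
  have hdiff_nonneg : ∀ r, 0 ≤ E r - E (r + 1) := fun r => sub_nonneg.2 (hE (by omega))
  have hdiff : Summable fun r => E r - E (r + 1) :=
    hE.summable_int_sub_succ ⟨0, by rintro _ ⟨r, rfl⟩; exact hE.le_of_tendsto hlim r⟩ hbdd
  have hsplit :
      (fun r : ℤ => (E r - E (r + 1)) * q ^ ((d : ℤ) * r) * q ^ ((d : ℤ) * min (-r) R)) =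
      (Set.Ioi (-R)).indicator (fun r => E r - E (r + 1)) + (Set.Iic (-R)).indicator
        fun r => q ^ ((d : ℤ) * R) * ((E r - E (r + 1)) * q ^ ((d : ℤ) * r)) := by
    ext r
    by_cases hr : r ≤ -R
    · rw [Pi.add_apply, Set.indicator_of_notMem (Set.notMem_Ioi.2 hr),
        Set.indicator_of_mem (Set.mem_Iic.2 hr), min_eq_right (by omega)]
      ring
    · rw [Pi.add_apply, Set.indicator_of_mem (Set.mem_Ioi.2 (by omega)),
        Set.indicator_of_notMem (Set.notMem_Iic.2 (not_le.1 hr)), min_eq_left (by omega),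
        mul_assoc, ← zpow_add₀ hq0]
      simp
  have hlow : Summable ((Set.Iic (-R)).indicator
      fun r => q ^ ((d : ℤ) * R) * ((E r - E (r + 1)) * q ^ ((d : ℤ) * r))) := by
    refine hdiff.of_nonneg_of_le (fun r => Set.indicator_nonneg (fun r _ => by
      have := hdiff_nonneg r; positivity) r) fun r => ?_
    by_cases hr : r ≤ -R
    · rw [Set.indicator_of_mem (Set.mem_Iic.2 hr), mul_left_comm, ← zpow_add₀ hq0]
      exact mul_le_of_le_one_right (hdiff_nonneg r) (zpow_le_one_of_nonpos₀ hq (by nlinarith))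
    · rw [Set.indicator_of_notMem (by simpa using hr)]
      exact hdiff_nonneg r
  rw [hsplit]
  refine (hE.hasSum_indicator_Ioi_sub_succ hlim (-R)).add ?_
  rw [← tsum_mul_left]
  convert hlow.hasSum using 1
  exact tsum_subtype (Set.Iic (-R))
    fun r => q ^ ((d : ℤ) * R) * ((E r - E (r + 1)) * q ^ ((d : ℤ) * r))

theorem eq_zpow_of_apply_add_one_eq_mul {G₀ : Type*} [GroupWithZero G₀] {f : ℤ → G₀} {c : G₀}
    (hc : c ≠ 0) (h0 : f 0 = 1) (h : ∀ n, f (n + 1) = c * f n) (n : ℤ) : f n = c ^ n := by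
  induction n using Int.induction_on with
  | zero => simpa using h0
  | succ n ih => rw [h, ih, add_comm, zpow_one_add₀ hc]
  | pred n ih =>
    have hstep := h (-n - 1)
    rw [sub_add_cancel, ih] at hstep
    rw [(eq_inv_mul_iff_mul_eq₀ hc).2 hstep.symm, ← zpow_neg_one, ← zpow_add₀ hc, neg_add_eq_sub]

namespace Padic

variable {p : ℕ} [hp : Fact p.Prime]

theorem norm_natCast_sub_natCast_eq_one {a b : ℕ} (ha : a < p) (hb : b < p) (hab : a ≠ b) :
    ‖(a - b : ℚ_[p])‖ = 1 := by
  have hndvd : ¬ (p : ℤ) ∣ (a - b : ℤ) := fun h => hab <| by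
    have := Int.eq_zero_of_abs_lt_dvd h (by rw [abs_lt]; omega)
    omega
  rw [← norm_intCast_lt_one_iff, not_lt] at hndvd
  exact le_antisymm (by exact_mod_cast norm_int_le_one (a - b : ℤ)) (by exact_mod_cast hndvd)

theorem exists_fin_norm_sub_mul_zpow_le {x : ℚ_[p]} {n : ℤ} (hx : ‖x‖ ≤ (p : ℝ) ^ (n + 1)) :
    ∃ a : Fin p, ‖x - a * (p : ℚ_[p]) ^ (-(n + 1))‖ ≤ (p : ℝ) ^ n := by
  have hp0 : (p : ℚ_[p]) ≠ 0 := by exact_mod_cast hp.out.ne_zero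
  have hp' : (0 : ℝ) < p := by exact_mod_cast hp.out.pos
  set y := x * (p : ℚ_[p]) ^ (n + 1)
  have hy : ‖y‖ ≤ 1 := by
    rw [norm_mul, norm_p_zpow, ← le_mul_inv_iff₀ (zpow_pos hp' _), one_mul, ← zpow_neg, neg_neg]
    exact hx
  obtain ⟨k, hk, hmem⟩ := PadicInt.exists_mem_range ⟨y, hy⟩
  have hyk : ‖y - k‖ < 1 := PadicInt.mem_nonunits.1 hmem
  refine ⟨⟨k, hk⟩, ?_⟩
  have hsub : x - k * (p : ℚ_[p]) ^ (-(n + 1)) = (y - k) * (p : ℚ_[p]) ^ (-(n + 1)) := by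
    rw [sub_mul, mul_assoc, ← zpow_add₀ hp0, add_neg_cancel, zpow_zero, mul_one]
  rw [norm_le_pow_iff_norm_lt_pow_add_one, Fin.val_mk, hsub, norm_mul, norm_p_zpow, neg_neg]
  exact mul_lt_of_lt_one_left (zpow_pos hp' _) hyk

end Padic

theorem closedBall_inter_closedBall_eq_closedBall_min {X : Type*} [PseudoMetricSpace X] (x : X)
    (r s : ℝ) :
    closedBall x r ∩ closedBall x s = closedBall x (min r s) := by
  ext y
  simp

section Balls

variable {p : ℕ} [hp : Fact p.Prime] {d : ℕ}

theorem closedBall_zpow_add_one_eq_iUnion (n : ℤ) :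
    closedBall (0 : Fin d → ℚ_[p]) ((p : ℝ) ^ (n + 1)) =
      ⋃ v : Fin d → Fin p, closedBall (fun i => (v i : ℚ_[p]) * (p : ℚ_[p]) ^ (-(n + 1)))
        ((p : ℝ) ^ n) := by
  have hp0 : (0 : ℝ) < p := by exact_mod_cast hp.out.pos
  ext x
  simp only [Set.mem_iUnion, mem_closedBall, dist_eq_norm, sub_zero,
    pi_norm_le_iff_of_nonneg (zpow_pos hp0 _).le, Pi.sub_apply]
  constructor
  · intro hx
    choose a ha using fun i => Padic.exists_fin_norm_sub_mul_zpow_le (hx i)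
    exact ⟨a, ha⟩
  · rintro ⟨v, hv⟩ i
    have hcenter : ‖(v i : ℚ_[p]) * (p : ℚ_[p]) ^ (-(n + 1))‖ ≤ (p : ℝ) ^ (n + 1) := by
      rw [norm_mul, Padic.norm_p_zpow, neg_neg]
      exact mul_le_of_le_one_left (zpow_pos hp0 _).le
        (IsUltrametricDist.norm_natCast_le_one ℚ_[p] _)
    calc ‖x i‖ ≤ max ‖x i - (v i : ℚ_[p]) * (p : ℚ_[p]) ^ (-(n + 1))‖
          ‖(v i : ℚ_[p]) * (p : ℚ_[p]) ^ (-(n + 1))‖ := by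
          simpa using Padic.nonarchimedean (x i - (v i : ℚ_[p]) * (p : ℚ_[p]) ^ (-(n + 1)))
            ((v i : ℚ_[p]) * (p : ℚ_[p]) ^ (-(n + 1)))
      _ ≤ (p : ℝ) ^ (n + 1) :=
          max_le ((hv i).trans (zpow_le_zpow_right₀ (by exact_mod_cast hp.out.one_lt.le)
            (by omega))) hcenter

theorem pairwise_disjoint_closedBall_mul_zpow (n : ℤ) :
    Pairwise (Function.onFun Disjoint fun v : Fin d → Fin p =>
      closedBall (fun i => (v i : ℚ_[p]) * (p : ℚ_[p]) ^ (-(n + 1))) ((p : ℝ) ^ n)) := by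
  intro v w hvw
  obtain ⟨i, hi⟩ := Function.ne_iff.1 hvw
  refine Set.disjoint_left.2 fun x hxv hxw => ?_
  have hclose := (dist_triangle_max _ (x i) _).trans (max_le
    ((dist_comm _ (x i)).trans_le ((dist_le_pi_dist x _ i).trans (mem_closedBall.1 hxv)))
    ((dist_le_pi_dist x _ i).trans (mem_closedBall.1 hxw)))
  rw [dist_eq_norm, ← sub_mul, norm_mul, Padic.norm_natCast_sub_natCast_eq_one (v i).2 (w i).2
    (Fin.val_ne_of_ne hi), one_mul, Padic.norm_p_zpow, neg_neg] at hclose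
  exact (zpow_lt_zpow_right₀ (by exact_mod_cast hp.out.one_lt) (by omega)).not_ge
    hclose

theorem addHaar_real_closedBall_zpow_add_one (μ : Measure (Fin d → ℚ_[p])) [μ.IsAddHaarMeasure]
    (n : ℤ) :
    μ.real (closedBall 0 ((p : ℝ) ^ (n + 1))) =
      (p : ℝ) ^ d * μ.real (closedBall 0 ((p : ℝ) ^ n)) := by
  rw [closedBall_zpow_add_one_eq_iUnion, measureReal_iUnion_fintype
    (pairwise_disjoint_closedBall_mul_zpow n) (fun _ => measurableSet_closedBall)
    fun _ => measure_closedBall_lt_top.ne]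
  simp [Measure.addHaar_real_closedBall_center]

theorem addHaar_real_closedBall_zpow (μ : Measure (Fin d → ℚ_[p])) [μ.IsAddHaarMeasure]
    (hμ : μ (closedBall 0 1) = 1) (n : ℤ) :
    μ.real (closedBall 0 ((p : ℝ) ^ n)) = (p : ℝ) ^ ((d : ℤ) * n) := by
  rw [zpow_mul, zpow_natCast]
  refine eq_zpow_of_apply_add_one_eq_mul (f := fun n => μ.real (closedBall 0 ((p : ℝ) ^ n)))
    (pow_ne_zero _ (by exact_mod_cast hp.out.ne_zero)) ?_
    (addHaar_real_closedBall_zpow_add_one μ) n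
  simp [measureReal_def, hμ]

end Balls

theorem integral_tsum_mul_indicator_one {α ι : Type*} [MeasurableSpace α] [Countable ι]
    {μ : Measure α} [IsFiniteMeasure μ] {s : ι → Set α} (hs : ∀ i, MeasurableSet (s i))
    {c : ι → ℝ} (hc : Summable fun i => |c i| * μ.real (s i)) :
    ∫ x, ∑' i, c i * (s i).indicator (fun _ => (1 : ℝ)) x ∂μ = ∑' i, c i * μ.real (s i) := by
  have hint : ∀ a i, ∫ x, a * (s i).indicator (fun _ => (1 : ℝ)) x ∂μ = a * μ.real (s i) :=
    fun a i => by rw [integral_const_mul, ← Pi.one_def, integral_indicator_one (hs i)]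
  rw [← integral_tsum_of_summable_integral_norm
    (fun i => ((integrable_const 1).indicator (hs i)).const_mul (c i))]
  · exact tsum_congr fun i => hint (c i) i
  · convert hc using 2 with i
    simp_rw [norm_mul, norm_indicator_eq_indicator_norm, norm_one, Real.norm_eq_abs]
    exact hint _ i

section Density

variable {p : ℕ} [hp : Fact p.Prime] {d : ℕ}

theorem setIntegral_closedBall_tsum_sub_mul_indicator (μ : Measure (Fin d → ℚ_[p]))
    [μ.IsAddHaarMeasure] (hμ : μ (closedBall 0 1) = 1) {E : ℤ → ℝ} (hE : Antitone E)
    (hbdd : BddAbove (Set.range E)) (hlim : Tendsto E atTop (𝓝 0)) (R : ℤ) :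
    ∫ x in closedBall (0 : Fin d → ℚ_[p]) ((p : ℝ) ^ R),
        ∑' r : ℤ, (E r - E (r + 1)) * (p : ℝ) ^ ((d : ℤ) * r) *
          (closedBall (0 : Fin d → ℚ_[p]) ((p : ℝ) ^ (-r))).indicator (fun _ => (1 : ℝ)) x ∂μ =
      E (-R + 1) + (p : ℝ) ^ ((d : ℤ) * R) *
        ∑' j : {j : ℤ // j ≤ -R}, (E j - E (j + 1)) * (p : ℝ) ^ ((d : ℤ) * j) := by
  have hp1 : (1 : ℝ) < p := by exact_mod_cast hp.out.one_lt
  have hseries := hasSum_sub_succ_mul_zpow_mul_zpow_min hE hbdd hlim hp1.le d R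
  have hball : ∀ r : ℤ, (μ.restrict (closedBall 0 ((p : ℝ) ^ R))).real
      (closedBall 0 ((p : ℝ) ^ (-r))) = (p : ℝ) ^ ((d : ℤ) * min (-r) R) := fun r => by
    rw [measureReal_restrict_apply measurableSet_closedBall,
      closedBall_inter_closedBall_eq_closedBall_min,
      ← (zpow_right_mono₀ hp1.le).map_min, addHaar_real_closedBall_zpow μ hμ]
  have hcoeff : ∀ r : ℤ, 0 ≤ (E r - E (r + 1)) * (p : ℝ) ^ ((d : ℤ) * r) := fun r =>
    mul_nonneg (sub_nonneg.2 (hE (by omega))) (zpow_pos (zero_lt_one.trans hp1) _).le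
  have : IsFiniteMeasure (μ.restrict (closedBall 0 ((p : ℝ) ^ R))) :=
    isFiniteMeasure_restrict.2 measure_closedBall_lt_top.ne
  rw [integral_tsum_mul_indicator_one (fun _ => measurableSet_closedBall)]
  · simp_rw [hball]
    exact hseries.tsum_eq
  · simp_rw [hball, abs_of_nonneg (hcoeff _)]
    exact hseries.summable

end Density

section ExpDecay

variable {c q b : ℝ}

theorem antitone_exp_neg_mul_rpow (hc : 0 ≤ c) (hq : 1 ≤ q) (hb : 0 ≤ b) :
    Antitone fun r : ℤ => Real.exp (-(c * q ^ ((r : ℝ) * b))) := fun r s hrs => by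
  dsimp only
  gcongr

theorem bddAbove_range_exp_neg_mul_rpow (hc : 0 ≤ c) (hq : 0 ≤ q) :
    BddAbove (Set.range fun r : ℤ => Real.exp (-(c * q ^ ((r : ℝ) * b)))) := by
  refine ⟨1, ?_⟩
  rintro _ ⟨r, rfl⟩
  exact Real.exp_le_one_iff.2 (neg_nonpos.2 (by positivity))

theorem tendsto_exp_neg_mul_rpow_atTop (hc : 0 < c) (hq : 1 < q) (hb : 0 < b) :
    Tendsto (fun r : ℤ => Real.exp (-(c * q ^ ((r : ℝ) * b)))) atTop (𝓝 0) :=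
  Real.tendsto_exp_neg_atTop_nhds_zero.comp <|
    ((tendsto_rpow_atTop_of_base_gt_one q hq).comp
      (tendsto_intCast_atTop_atTop.atTop_mul_const hb)).const_mul_atTop hc

end ExpDecay

theorem rho_measure_ball_general (p : ℕ) [Fact p.Prime] (σ b t : ℝ)
    (hσ : 0 < σ) (hb : 0 < b) (ht : 0 < t) (d : ℕ) (R : ℤ)
    (μ : Measure (Fin d → ℚ_[p])) [μ.IsAddHaarMeasure]
    (hμ : μ (closedBall (0 : Fin d → ℚ_[p]) 1) = 1) :
    ∫ x in closedBall (0 : Fin d → ℚ_[p]) ((p : ℝ) ^ R), rho p σ b d t x ∂μ =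
      Real.exp (-(σ * t * (p : ℝ) ^ (((-R : ℤ) + 1 : ℝ) * b))) +
        (p : ℝ) ^ ((d : ℤ) * R) *
          ∑' j : {j : ℤ // j ≤ -R},
            (Real.exp (-(σ * t * (p : ℝ) ^ ((j.1 : ℝ) * b))) -
                Real.exp (-(σ * t * (p : ℝ) ^ (((j.1 : ℝ) + 1) * b)))) *
              (p : ℝ) ^ ((d : ℤ) * j.1) := by
  have hp : (1 : ℝ) < p := by exact_mod_cast (Fact.out : p.Prime).one_lt
  have hσt : 0 < σ * t := mul_pos hσ ht
  have key := setIntegral_closedBall_tsum_sub_mul_indicator μ hμ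
    (antitone_exp_neg_mul_rpow hσt.le hp.le hb.le) (bddAbove_range_exp_neg_mul_rpow hσt.le
      (zero_le_one.trans hp.le)) (tendsto_exp_neg_mul_rpow_atTop hσt hp hb) R
  simp only [Int.cast_add, Int.cast_one] at key
  exact key

/-- The measure of the ball `B_d(R)` under the density `ρ_d(t,·)` equals
`exp(−σt p^{(−R+1)b}) + p^{dR} Σ_{j ≤ −R} (exp(−σt p^{jb}) − exp(−σt p^{(j+1)b})) p^{dj}`. -/
theorem rho_measure_ball (p : ℕ) [Fact p.Prime] (σ b t : ℝ)
    (hσ : 0 < σ) (hb : 0 < b) (ht : 0 < t) (d : ℕ) (hd : 1 ≤ d) (R : ℤ)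
    (μ : Measure (Fin d → ℚ_[p])) [μ.IsAddHaarMeasure]
    (hμ : μ (closedBall (0 : Fin d → ℚ_[p]) 1) = 1) :
    ∫ x in closedBall (0 : Fin d → ℚ_[p]) ((p : ℝ) ^ R), rho p σ b d t x ∂μ =
      Real.exp (-(σ * t * (p : ℝ) ^ (((-R : ℤ) + 1 : ℝ) * b))) +
        (p : ℝ) ^ ((d : ℤ) * R) *
          ∑' j : {j : ℤ // j ≤ -R},
            (Real.exp (-(σ * t * (p : ℝ) ^ ((j.1 : ℝ) * b))) -
                Real.exp (-(σ * t * (p : ℝ) ^ (((j.1 : ℝ) + 1) * b)))) *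
              (p : ℝ) ^ ((d : ℤ) * j.1) :=
  rho_measure_ball_general p σ b t hσ hb ht d R μ hμ
end

section
/- Fix a prime p, σ > 0, b > 0, t > 0, d ≥ 2, integers r ≤ R, and a ∈ B(R) ⊂ Q_p. Let μ_t be the probability measure on Q_p^d with density ρ_d(t,·). Then the conditional probability μ_t(x₁ ∈ B(r,a) | (x₂,…,x_d) ∈ S_{d−1}(R)) equals p^r · [Σ_{j ≤ −R} (e^{−σt p^{jb}} − e^{−σt p^{(j+1)b}}) p^{dj}] / [Σ_{j ≤ −R} (e^{−σt p^{jb}} − e^{−σt p^{(j+1)b}}) p^{(d−1)j}]. -/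
open MeasureTheory Metric Real

/-!
On the sphere `‖x‖ = p^m` the density is constant, `ρ_d(t,x) = Σ_{j ≤ -m} c_j p^{dj}` with
`c_j = e^{−σt p^{jb}} − e^{−σt p^{(j+1)b}}` (`rhoWeight`), because `x ∈ B_d(−j)` iff `j ≤ −m`.
By the ultrametric inequality every point of the event `x₁ ∈ B(r,a)`, `‖(x₂,…,x_d)‖ = p^R` has
norm `p^R`, so its mass is `(Σ_{j ≤ -R} c_j p^{dj}) · μ(B(r,a) × S_{d−1}(R))`. For the
conditioning event integrate `ρ_d` term by term: the `j`-th term contributes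
`c_j p^{dj} μ(B(−j,0) × S_{d−1}(R))`, and nothing unless `j ≤ −R`. A Haar measure on `ℚ_p^d` is
a product `ν ⊗ ν'` along the first coordinate, and `ν(B(k,x)) = p^k ν(ℤ_p)` because a ball of
radius `p^{k+1}` is the disjoint union of `p` balls of radius `p^k`. So both masses are multiples
of `ν(ℤ_p) ν'(S_{d−1}(R))`, which cancels, and `p^{dj} p^{−j} = p^{(d−1)j}` gives the
denominator.
-/

section HeadTail

lemma pi_norm_le_iff_head_tail {E : Type*} [SeminormedAddGroup E] {n : ℕ}
    {x : Fin (n + 1) → E} {r : ℝ} (hr : 0 ≤ r) :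
    ‖x‖ ≤ r ↔ ‖x 0‖ ≤ r ∧ ‖Fin.tail x‖ ≤ r := by
  simp only [pi_norm_le_iff_of_nonneg hr, Fin.forall_fin_succ, Fin.tail]

lemma pi_norm_eq_of_norm_head_le {E : Type*} [SeminormedAddGroup E] {n : ℕ}
    {x : Fin (n + 1) → E} {s : ℝ} (h0 : ‖x 0‖ ≤ s) (htail : ‖Fin.tail x‖ = s) :
    ‖x‖ = s :=
  le_antisymm ((pi_norm_le_iff_head_tail (htail ▸ norm_nonneg _)).mpr ⟨h0, htail.le⟩)
    (htail ▸ ((pi_norm_le_iff_head_tail (norm_nonneg x)).mp le_rfl).2)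

variable {G : Type*} [AddGroup G] [TopologicalSpace G] [IsTopologicalAddGroup G]
  [LocallyCompactSpace G] [SecondCountableTopology G] [MeasurableSpace G] [BorelSpace G]

lemma exists_addHaar_measure_head_tail {n : ℕ} (μ : Measure (Fin (n + 1) → G))
    [μ.IsAddHaarMeasure] :
    ∃ (ν : Measure G) (ν' : Measure (Fin n → G)), ν.IsAddHaarMeasure ∧ ν'.IsAddHaarMeasure ∧
      ∀ s t, μ {x | x 0 ∈ s ∧ Fin.tail x ∈ t} = ν s * ν' t := by
  set P : Measure (Fin (n + 1) → G) := Measure.pi fun _ => Measure.addHaar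
  set c := μ.addHaarScalarFactor P
  refine ⟨Measure.addHaar, c • Measure.pi fun _ => Measure.addHaar, inferInstance,
    .nnreal_smul _ (Measure.addHaarScalarFactor_pos_of_isAddHaarMeasure μ P).ne',
    fun s t => ?_⟩
  have hset : {x : Fin (n + 1) → G | x 0 ∈ s ∧ Fin.tail x ∈ t} =
      MeasurableEquiv.piFinSuccAbove (fun _ => G) 0 ⁻¹' s ×ˢ t := by
    ext x
    simp [MeasurableEquiv.piFinSuccAbove_apply]
  rw [Measure.isAddLeftInvariant_eq_smul μ P, Measure.smul_apply, hset,
    (measurePreserving_piFinSuccAbove (fun _ => Measure.addHaar) 0).measure_preimage_equiv,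
    Measure.prod_prod, Measure.smul_apply]
  simp only [ENNReal.smul_def, smul_eq_mul]
  ring

end HeadTail

lemma summable_zpow_subtype_le {q : ℝ} (hq : 1 < q) (J : ℤ) :
    Summable fun j : {j : ℤ // j ≤ J} => q ^ (j : ℤ) := by
  have hg : Function.Injective fun n : ℕ => (⟨J - n, by omega⟩ : {j : ℤ // j ≤ J}) :=
    fun a b h => by simpa using congrArg Subtype.val h
  refine (hg.summable_iff fun j hj =>
    absurd ⟨(J - j).toNat, Subtype.ext (by have := j.2; simp only; omega)⟩ hj).mp ?_
  refine ((summable_geometric_of_lt_one (by positivity) (inv_lt_one_of_one_lt₀ hq)).mul_left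
    (q ^ J)).congr fun n => ?_
  simp [zpow_sub₀ (zero_lt_one.trans hq).ne', div_eq_mul_inv]

namespace Padic

variable {p : ℕ} [Fact p.Prime]

lemma one_lt_prime_cast : (1 : ℝ) < p := mod_cast (Fact.out : p.Prime).one_lt

lemma exists_pi_norm_eq_zpow {ι : Type*} [Fintype ι] {x : ι → ℚ_[p]} (hx : x ≠ 0) :
    ∃ m : ℤ, ‖x‖ = (p : ℝ) ^ m := by
  obtain ⟨i, -⟩ := Function.ne_iff.mp hx
  have : Nonempty ι := ⟨i⟩
  obtain ⟨k, hk : ‖x k‖ = ‖x‖⟩ := (IsGreatest.pi_norm x).1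
  have hxk : x k ≠ 0 := norm_ne_zero_iff.mp (by rw [hk]; exact norm_ne_zero_iff.mpr hx)
  exact ⟨-(x k).valuation, hk.symm.trans (norm_eq_zpow_neg_valuation hxk)⟩

lemma exists_natCast_norm_sub_le_inv {y : ℚ_[p]} (hy : ‖y‖ ≤ 1) :
    ∃ m < p, ‖y - m‖ ≤ (p : ℝ) ^ (-1 : ℤ) := by
  obtain ⟨m, hmp, hm⟩ := PadicInt.exists_mem_range (⟨y, hy⟩ : ℤ_[p])
  have hlt : ‖y - m‖ < 1 := PadicInt.mem_nonunits.mp hm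
  exact ⟨m, hmp, (norm_le_pow_iff_norm_lt_pow_add_one _ _).mpr (by simpa using hlt)⟩

lemma norm_natCast_sub_natCast {i j : ℕ} (hi : i < p) (hj : j < p) (hij : i ≠ j) :
    ‖(i : ℚ_[p]) - j‖ = 1 := by
  have hndvd : ¬ (p : ℤ) ∣ (i - j : ℤ) := fun h =>
    hij (by have := Int.eq_zero_of_abs_lt_dvd h (by rw [abs_lt]; omega); omega)
  have h : ‖((i - j : ℤ) : ℚ_[p])‖ = 1 :=
    (norm_int_le_one _).antisymm (not_lt.mp (mt norm_intCast_lt_one_iff.mp hndvd))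
  exact_mod_cast h

lemma closedBall_zpow_succ_eq_iUnion (k : ℤ) :
    closedBall (0 : ℚ_[p]) ((p : ℝ) ^ (k + 1)) =
      ⋃ i : Fin p, closedBall ((i : ℚ_[p]) * (p : ℚ_[p]) ^ (-(k + 1))) ((p : ℝ) ^ k) := by
  have hp : (0 : ℝ) < p := zero_lt_one.trans one_lt_prime_cast
  have hp0 : (p : ℚ_[p]) ≠ 0 := by exact_mod_cast (Fact.out : p.Prime).ne_zero
  have hscale (z : ℚ_[p]) :
      ‖z * (p : ℚ_[p]) ^ (-(k + 1))‖ = ‖z‖ * (p : ℝ) ^ (k + 1) := by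
    rw [norm_mul, norm_p_zpow, neg_neg]
  refine subset_antisymm (fun x hx => ?_) (Set.iUnion_subset fun i => ?_)
  · rw [mem_closedBall_zero_iff] at hx
    obtain ⟨m, hmp, hm⟩ :
        ∃ m < p, ‖x * (p : ℚ_[p]) ^ (k + 1) - m‖ ≤ (p : ℝ) ^ (-1 : ℤ) := by
      refine exists_natCast_norm_sub_le_inv ?_
      rw [norm_mul, norm_p_zpow, zpow_neg, ← div_eq_mul_inv, div_le_one (by positivity)]
      exact hx
    refine Set.mem_iUnion.mpr ⟨⟨m, hmp⟩, ?_⟩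
    rw [mem_closedBall, dist_eq_norm]
    have : x - (m : ℚ_[p]) * (p : ℚ_[p]) ^ (-(k + 1)) =
        (x * (p : ℚ_[p]) ^ (k + 1) - m) * (p : ℚ_[p]) ^ (-(k + 1)) := by
      rw [sub_mul, mul_assoc, ← zpow_add₀ hp0, add_neg_cancel, zpow_zero, mul_one]
    rw [this, hscale]
    calc _ ≤ (p : ℝ) ^ (-1 : ℤ) * (p : ℝ) ^ (k + 1) := by gcongr
      _ = (p : ℝ) ^ k := by rw [← zpow_add₀ hp.ne']; ring_nf
  · have hc :
        (i : ℚ_[p]) * (p : ℚ_[p]) ^ (-(k + 1)) ∈ closedBall 0 ((p : ℝ) ^ (k + 1)) := by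
      rw [mem_closedBall_zero_iff, hscale]
      exact mul_le_of_le_one_left (by positivity) (by exact_mod_cast norm_int_le_one (i : ℤ))
    rw [IsUltrametricDist.closedBall_eq_of_mem hc]
    exact closedBall_subset_closedBall (zpow_le_zpow_right₀ one_lt_prime_cast.le (by omega))

lemma pairwise_disjoint_closedBall_zpow (k : ℤ) :
    Pairwise (Function.onFun Disjoint fun i : Fin p =>
      closedBall ((i : ℚ_[p]) * (p : ℚ_[p]) ^ (-(k + 1))) ((p : ℝ) ^ k)) := by
  intro i j hij
  refine (IsUltrametricDist.closedBall_eq_or_disjoint _ _ _).resolve_left fun h => ?_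
  have hmem : (j : ℚ_[p]) * (p : ℚ_[p]) ^ (-(k + 1)) ∈
      closedBall ((i : ℚ_[p]) * (p : ℚ_[p]) ^ (-(k + 1))) ((p : ℝ) ^ k) :=
    h ▸ mem_closedBall_self (by positivity)
  rw [mem_closedBall, dist_eq_norm, ← sub_mul, norm_mul, norm_p_zpow, neg_neg,
    norm_natCast_sub_natCast j.2 i.2 (Fin.val_ne_of_ne hij.symm), one_mul] at hmem
  exact absurd hmem (not_le.mpr (zpow_lt_zpow_right₀ one_lt_prime_cast (by omega)))

lemma addHaar_closedBall_zpow_succ (ν : Measure ℚ_[p]) [ν.IsAddHaarMeasure] (k : ℤ) :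
    ν (closedBall 0 ((p : ℝ) ^ (k + 1))) = p * ν (closedBall 0 ((p : ℝ) ^ k)) := by
  rw [closedBall_zpow_succ_eq_iUnion,
    measure_iUnion (pairwise_disjoint_closedBall_zpow k) fun _ => measurableSet_closedBall]
  simp [Measure.addHaar_closedBall_center]

lemma addHaar_closedBall_zpow (ν : Measure ℚ_[p]) [ν.IsAddHaarMeasure] (x : ℚ_[p]) (k : ℤ) :
    ν (closedBall x ((p : ℝ) ^ k)) = ENNReal.ofReal ((p : ℝ) ^ k) * ν (closedBall 0 1) := by
  have hp : (0 : ℝ) < p := zero_lt_one.trans one_lt_prime_cast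
  have hp0 : (p : ENNReal) ≠ 0 := by exact_mod_cast hp.ne'
  have hstep (k : ℤ) :
      ENNReal.ofReal ((p : ℝ) ^ (k + 1)) = p * ENNReal.ofReal ((p : ℝ) ^ k) := by
    rw [zpow_add_one₀ hp.ne', mul_comm, ENNReal.ofReal_mul hp.le, ENNReal.ofReal_natCast]
  rw [Measure.addHaar_closedBall_center]
  induction k using Int.induction_on with
  | zero => simp
  | succ k ih => rw [addHaar_closedBall_zpow_succ, ih, hstep, mul_assoc]
  | pred k ih =>
    have h := addHaar_closedBall_zpow_succ ν (-k - 1)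
    have hs := hstep (-k - 1)
    rw [sub_add_cancel] at h hs
    rw [ih, hs, mul_assoc] at h
    exact ((ENNReal.mul_right_inj hp0 (ENNReal.natCast_ne_top p)).mp h).symm

lemma exists_addHaar_ball_tail_sphere {n : ℕ} (hn : n ≠ 0)
    (μ : Measure (Fin (n + 1) → ℚ_[p])) [μ.IsAddHaarMeasure] (R : ℤ) :
    ∃ K : ENNReal, K ≠ 0 ∧ K ≠ ⊤ ∧ ∀ (c : ℚ_[p]) (u : ℤ),
      μ {x | x 0 ∈ closedBall c ((p : ℝ) ^ u) ∧ Fin.tail x ∈ sphere 0 ((p : ℝ) ^ R)} =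
        ENNReal.ofReal ((p : ℝ) ^ u) * K := by
  obtain ⟨ν, ν', hν, hν', hμ⟩ := exists_addHaar_measure_head_tail μ
  have : NeZero n := ⟨hn⟩
  have hR : (p : ℝ) ^ R ≠ 0 := (zpow_pos (zero_lt_one.trans one_lt_prime_cast) R).ne'
  have hsphere : (sphere (0 : Fin n → ℚ_[p]) ((p : ℝ) ^ R)).Nonempty :=
    ⟨fun _ => (p : ℚ_[p]) ^ (-R), by simp⟩
  refine ⟨ν (closedBall 0 1) * ν' (sphere 0 ((p : ℝ) ^ R)),
    mul_ne_zero (measure_closedBall_pos ν 0 one_pos).ne'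
      ((IsUltrametricDist.isOpen_sphere 0 hR).measure_ne_zero ν' hsphere),
    ENNReal.mul_ne_top measure_closedBall_lt_top.ne (isCompact_sphere _ _).measure_lt_top.ne,
    fun c u => ?_⟩
  rw [hμ, addHaar_closedBall_zpow, mul_assoc]

end Padic

noncomputable def rhoWeight (p : ℕ) (σ b t : ℝ) (j : ℤ) : ℝ :=
  Real.exp (-(σ * t * (p : ℝ) ^ ((j : ℝ) * b))) -
    Real.exp (-(σ * t * (p : ℝ) ^ (((j : ℝ) + 1) * b)))

section rhoWeight

variable {p : ℕ} {σ b t : ℝ}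

lemma rhoWeight_pos (hp : 1 < p) (hσt : 0 < σ * t) (hb : 0 < b) (j : ℤ) :
    0 < rhoWeight p σ b t j := by
  rw [rhoWeight, sub_pos, Real.exp_lt_exp, neg_lt_neg_iff]
  exact mul_lt_mul_of_pos_left
    (Real.rpow_lt_rpow_of_exponent_lt (mod_cast hp) (by nlinarith)) hσt

lemma rhoWeight_le_one (hσt : 0 ≤ σ * t) (j : ℤ) : rhoWeight p σ b t j ≤ 1 := by
  have h : Real.exp (-(σ * t * (p : ℝ) ^ ((j : ℝ) * b))) ≤ 1 :=
    Real.exp_le_one_iff.mpr (neg_nonpos.mpr (mul_nonneg hσt (by positivity)))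
  rw [rhoWeight]
  linarith [Real.exp_pos (-(σ * t * (p : ℝ) ^ (((j : ℝ) + 1) * b)))]

lemma rhoWeight_mul_zpow_pos (hp : 1 < p) (hσt : 0 < σ * t) (hb : 0 < b) (k j : ℤ) :
    0 < rhoWeight p σ b t j * (p : ℝ) ^ (k * j) :=
  mul_pos (rhoWeight_pos hp hσt hb j) (zpow_pos (by positivity) _)

lemma summable_rhoWeight_mul_zpow (hp : 1 < p) (hσt : 0 < σ * t) (hb : 0 < b) {k : ℤ}
    (hk : 0 < k) (J : ℤ) :
    Summable fun j : {j : ℤ // j ≤ J} => rhoWeight p σ b t j * (p : ℝ) ^ (k * j) := by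
  have hp' : (1 : ℝ) < p := mod_cast hp
  refine (summable_zpow_subtype_le (one_lt_zpow₀ hp' hk) J).of_nonneg_of_le
    (fun j => (rhoWeight_mul_zpow_pos hp hσt hb k j).le) fun j => ?_
  rw [← zpow_mul]
  exact mul_le_of_le_one_left (by positivity) (rhoWeight_le_one hσt.le j)

lemma ofReal_tsum_rhoWeight_mul_zpow (hp : 1 < p) (hσt : 0 < σ * t) (hb : 0 < b) {k : ℤ}
    (hk : 0 < k) (J : ℤ) :
    ENNReal.ofReal (∑' j : {j : ℤ // j ≤ J}, rhoWeight p σ b t j * (p : ℝ) ^ (k * j)) =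
      ∑' j : {j : ℤ // j ≤ J}, ENNReal.ofReal (rhoWeight p σ b t j * (p : ℝ) ^ (k * j)) :=
  ENNReal.ofReal_tsum_of_nonneg (fun j => (rhoWeight_mul_zpow_pos hp hσt hb k j).le)
    (summable_rhoWeight_mul_zpow hp hσt hb hk J)

lemma tsum_rhoWeight_mul_zpow_pos (hp : 1 < p) (hσt : 0 < σ * t) (hb : 0 < b) {k : ℤ}
    (hk : 0 < k) (J : ℤ) :
    0 < ∑' j : {j : ℤ // j ≤ J}, rhoWeight p σ b t j * (p : ℝ) ^ (k * j) :=
  (summable_rhoWeight_mul_zpow hp hσt hb hk J).tsum_pos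
    (fun j => (rhoWeight_mul_zpow_pos hp hσt hb k j).le) ⟨J, le_rfl⟩
    (rhoWeight_mul_zpow_pos hp hσt hb k J)

end rhoWeight

section rho

variable {p : ℕ} [Fact p.Prime] {σ b t : ℝ} {d : ℕ}

lemma mem_closedBall_zpow_iff_of_norm_eq {x : Fin d → ℚ_[p]} {m : ℤ}
    (hx : ‖x‖ = (p : ℝ) ^ m) (j : ℤ) : x ∈ closedBall 0 ((p : ℝ) ^ (-j)) ↔ j ≤ -m := by
  rw [mem_closedBall_zero_iff, hx, zpow_le_zpow_iff_right₀ Padic.one_lt_prime_cast]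
  omega

lemma rho_eq_tsum_of_norm_eq {x : Fin d → ℚ_[p]} {m : ℤ} (hx : ‖x‖ = (p : ℝ) ^ m) :
    rho p σ b d t x =
      ∑' j : {j : ℤ // j ≤ -m}, rhoWeight p σ b t j * (p : ℝ) ^ ((d : ℤ) * j) := by
  rw [rho, ← tsum_subtype_eq_of_support_subset (s := {j : ℤ | j ≤ -m})]
  · refine tsum_congr fun j => ?_
    rw [Set.indicator_of_mem ((mem_closedBall_zpow_iff_of_norm_eq hx j).mpr j.2), mul_one]
    rfl
  · intro j hj
    by_contra h
    apply hj
    simp only [Set.indicator_of_notMem (mt (mem_closedBall_zpow_iff_of_norm_eq hx j).mp h),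
      mul_zero]

lemma ofReal_rho_eq_tsum_indicator (hσt : 0 < σ * t) (hb : 0 < b) (hd : 0 < d)
    {x : Fin d → ℚ_[p]} (hx : x ≠ 0) :
    ENNReal.ofReal (rho p σ b d t x) = ∑' j : ℤ, (closedBall 0 ((p : ℝ) ^ (-j))).indicator
      (fun _ => ENNReal.ofReal (rhoWeight p σ b t j * (p : ℝ) ^ ((d : ℤ) * j))) x := by
  have hp : 1 < p := (Fact.out : p.Prime).one_lt
  obtain ⟨m, hm⟩ := Padic.exists_pi_norm_eq_zpow hx
  refine (congrArg ENNReal.ofReal (rho_eq_tsum_of_norm_eq hm)).trans <|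
    (ofReal_tsum_rhoWeight_mul_zpow hp hσt hb (by omega) (-m)).trans <|
    (tsum_subtype {j : ℤ | j ≤ -m} fun j =>
      ENNReal.ofReal (rhoWeight p σ b t j * (p : ℝ) ^ ((d : ℤ) * j))).trans <|
    tsum_congr fun j => ?_
  by_cases hj : j ≤ -m
  · rw [Set.indicator_of_mem (s := {j : ℤ | j ≤ -m}) hj,
      Set.indicator_of_mem ((mem_closedBall_zpow_iff_of_norm_eq hm j).mpr hj)]
  · rw [Set.indicator_of_notMem (s := {j : ℤ | j ≤ -m}) hj,
      Set.indicator_of_notMem (mt (mem_closedBall_zpow_iff_of_norm_eq hm j).mp hj)]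

lemma lintegral_rho (hσt : 0 < σ * t) (hb : 0 < b) (hd : 0 < d)
    (μ : Measure (Fin d → ℚ_[p])) {A : Set (Fin d → ℚ_[p])} (hA : MeasurableSet A) (h0 : 0 ∉ A) :
    ∫⁻ x in A, ENNReal.ofReal (rho p σ b d t x) ∂μ = ∑' j : ℤ,
      ENNReal.ofReal (rhoWeight p σ b t j * (p : ℝ) ^ ((d : ℤ) * j)) *
        μ (A ∩ closedBall 0 ((p : ℝ) ^ (-j))) := by
  rw [setLIntegral_congr_fun hA fun x hx =>
      ofReal_rho_eq_tsum_indicator hσt hb hd (ne_of_mem_of_not_mem hx h0),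
    lintegral_tsum fun j => (measurable_const.indicator measurableSet_closedBall).aemeasurable]
  refine tsum_congr fun j => ?_
  rw [lintegral_indicator measurableSet_closedBall, setLIntegral_const,
    Measure.restrict_apply measurableSet_closedBall, Set.inter_comm]

lemma withDensity_rho_of_forall_norm_eq (μ : Measure (Fin d → ℚ_[p]))
    {A : Set (Fin d → ℚ_[p])} (hA : MeasurableSet A) {m : ℤ}
    (hAm : ∀ x ∈ A, ‖x‖ = (p : ℝ) ^ m) :
    μ.withDensity (fun x => ENNReal.ofReal (rho p σ b d t x)) A = ENNReal.ofReal
      (∑' j : {j : ℤ // j ≤ -m}, rhoWeight p σ b t j * (p : ℝ) ^ ((d : ℤ) * j)) * μ A := by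
  rw [withDensity_apply _ hA, setLIntegral_congr_fun hA fun x hx => by
    rw [rho_eq_tsum_of_norm_eq (hAm x hx)], setLIntegral_const]

lemma inter_closedBall_zpow_eq_of_tail_norm_eq {n : ℕ} {R j : ℤ} (hj : j ≤ -R) :
    {x : Fin (n + 1) → ℚ_[p] | ‖Fin.tail x‖ = (p : ℝ) ^ R} ∩ closedBall 0 ((p : ℝ) ^ (-j)) =
      {x | x 0 ∈ closedBall 0 ((p : ℝ) ^ (-j)) ∧ Fin.tail x ∈ sphere 0 ((p : ℝ) ^ R)} := by
  have hR : (p : ℝ) ^ R ≤ (p : ℝ) ^ (-j) :=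
    zpow_le_zpow_right₀ Padic.one_lt_prime_cast.le (by omega)
  ext x
  simp only [Set.mem_inter_iff, Set.mem_ofPred_eq, mem_closedBall_zero_iff,
    mem_sphere_zero_iff_norm, pi_norm_le_iff_head_tail (zpow_nonneg (Nat.cast_nonneg p) (-j))]
  exact ⟨fun ⟨h, h0, _⟩ => ⟨h0, h⟩, fun ⟨h0, h⟩ => ⟨h, h0, h.trans_le hR⟩⟩

lemma inter_closedBall_zpow_eq_empty_of_tail_norm_eq {n : ℕ} {R j : ℤ} (hj : -R < j) :
    {x : Fin (n + 1) → ℚ_[p] | ‖Fin.tail x‖ = (p : ℝ) ^ R} ∩ closedBall 0 ((p : ℝ) ^ (-j)) =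
      ∅ := by
  refine Set.eq_empty_of_forall_notMem fun x ⟨hx, hxj⟩ => ?_
  rw [mem_closedBall_zero_iff, pi_norm_le_iff_head_tail (by positivity)] at hxj
  have hjR : (p : ℝ) ^ (-j) < (p : ℝ) ^ R :=
    zpow_lt_zpow_right₀ Padic.one_lt_prime_cast (by omega)
  have hx : ‖Fin.tail x‖ = (p : ℝ) ^ R := hx
  linarith [hxj.2]

lemma withDensity_rho_tail_norm_eq_tsum (hσt : 0 < σ * t) (hb : 0 < b) {n : ℕ}
    (μ : Measure (Fin (n + 1) → ℚ_[p])) (R : ℤ) :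
    μ.withDensity (fun x => ENNReal.ofReal (rho p σ b (n + 1) t x))
        {x | ‖Fin.tail x‖ = (p : ℝ) ^ R} =
      ∑' j : {j : ℤ // j ≤ -R},
        ENNReal.ofReal (rhoWeight p σ b t j * (p : ℝ) ^ (((n + 1 : ℕ) : ℤ) * j)) *
          μ {x | x 0 ∈ closedBall 0 ((p : ℝ) ^ (-(j : ℤ))) ∧
            Fin.tail x ∈ sphere 0 ((p : ℝ) ^ R)} := by
  have hmeas : MeasurableSet {x : Fin (n + 1) → ℚ_[p] | ‖Fin.tail x‖ = (p : ℝ) ^ R} :=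
    measurableSet_eq_fun (by fun_prop) measurable_const
  have h0 : (0 : Fin (n + 1) → ℚ_[p]) ∉ {x | ‖Fin.tail x‖ = (p : ℝ) ^ R} := by
    change ¬ ‖(0 : Fin n → ℚ_[p])‖ = _
    rw [norm_zero]
    exact (zpow_pos (zero_lt_one.trans Padic.one_lt_prime_cast) R).ne
  rw [withDensity_apply _ hmeas, lintegral_rho hσt hb n.succ_pos μ hmeas h0]
  refine (tsum_subtype_eq_of_support_subset fun j hj => ?_).symm.trans (tsum_congr fun j => ?_)
  · by_contra h
    apply hj
    rw [inter_closedBall_zpow_eq_empty_of_tail_norm_eq (not_le.mp h), measure_empty, mul_zero]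
  · rw [inter_closedBall_zpow_eq_of_tail_norm_eq j.2]

lemma withDensity_rho_tail_norm_eq (hσt : 0 < σ * t) (hb : 0 < b) {n : ℕ} (hn : 0 < n)
    (μ : Measure (Fin (n + 1) → ℚ_[p])) (R : ℤ) {K : ENNReal}
    (hK : ∀ u : ℤ,
      μ {x | x 0 ∈ closedBall 0 ((p : ℝ) ^ u) ∧ Fin.tail x ∈ sphere 0 ((p : ℝ) ^ R)} =
        ENNReal.ofReal ((p : ℝ) ^ u) * K) :
    μ.withDensity (fun x => ENNReal.ofReal (rho p σ b (n + 1) t x))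
        {x | ‖Fin.tail x‖ = (p : ℝ) ^ R} =
      ENNReal.ofReal
        (∑' j : {j : ℤ // j ≤ -R}, rhoWeight p σ b t j * (p : ℝ) ^ ((n : ℤ) * j)) * K := by
  have hp : 1 < p := (Fact.out : p.Prime).one_lt
  rw [withDensity_rho_tail_norm_eq_tsum hσt hb μ R,
    ofReal_tsum_rhoWeight_mul_zpow hp hσt hb (by omega) (-R), ← ENNReal.tsum_mul_right]
  refine tsum_congr fun j => ?_
  rw [hK, ← mul_assoc, ← ENNReal.ofReal_mul (rhoWeight_mul_zpow_pos hp hσt hb _ j).le,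
    mul_assoc, ← zpow_add₀ (by positivity)]
  congr 4
  push_cast
  ring

lemma withDensity_rho_ball_inter_tail_norm_eq {n : ℕ} (μ : Measure (Fin (n + 1) → ℚ_[p]))
    {a : ℚ_[p]} {r R : ℤ} (hrR : r ≤ R) (ha : ‖a‖ ≤ (p : ℝ) ^ R) :
    μ.withDensity (fun x => ENNReal.ofReal (rho p σ b (n + 1) t x))
        ({x | ‖x 0 - a‖ ≤ (p : ℝ) ^ r} ∩ {x | ‖Fin.tail x‖ = (p : ℝ) ^ R}) =
      ENNReal.ofReal (∑' j : {j : ℤ // j ≤ -R},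
          rhoWeight p σ b t j * (p : ℝ) ^ (((n + 1 : ℕ) : ℤ) * j)) *
        μ {x | x 0 ∈ closedBall a ((p : ℝ) ^ r) ∧ Fin.tail x ∈ sphere 0 ((p : ℝ) ^ R)} := by
  have hball : closedBall a ((p : ℝ) ^ r) ⊆ closedBall 0 ((p : ℝ) ^ R) := by
    rw [IsUltrametricDist.closedBall_eq_of_mem (mem_closedBall_zero_iff.mpr ha)]
    exact closedBall_subset_closedBall (zpow_le_zpow_right₀ Padic.one_lt_prime_cast.le hrR)
  have hA : {x : Fin (n + 1) → ℚ_[p] | ‖x 0 - a‖ ≤ (p : ℝ) ^ r} ∩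
      {x | ‖Fin.tail x‖ = (p : ℝ) ^ R} =
      {x | x 0 ∈ closedBall a ((p : ℝ) ^ r) ∧ Fin.tail x ∈ sphere 0 ((p : ℝ) ^ R)} := by
    ext x
    simp [dist_eq_norm]
  rw [hA]
  refine withDensity_rho_of_forall_norm_eq μ ?_ fun x ⟨h0, htail⟩ =>
    pi_norm_eq_of_norm_head_le (mem_closedBall_zero_iff.mp (hball h0))
      (mem_sphere_zero_iff_norm.mp htail)
  exact (measurableSet_closedBall.preimage (measurable_pi_apply 0)).inter
    (isClosed_sphere.measurableSet.preimage (by fun_prop))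

end rho

theorem conditional_component_probability_general (p : ℕ) [Fact p.Prime] (σ b t : ℝ)
    (hσ : 0 < σ) (hb : 0 < b) (ht : 0 < t) (n : ℕ) (hn : 1 ≤ n) (r R : ℤ) (hrR : r ≤ R)
    (a : ℚ_[p]) (ha : ‖a‖ ≤ (p : ℝ) ^ R)
    (μ : Measure (Fin (n + 1) → ℚ_[p])) [μ.IsAddHaarMeasure] :
    (μ.withDensity (fun x => ENNReal.ofReal (rho p σ b (n + 1) t x)))
        ({x : Fin (n + 1) → ℚ_[p] | ‖x 0 - a‖ ≤ (p : ℝ) ^ r} ∩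
          {x : Fin (n + 1) → ℚ_[p] | ‖Fin.tail x‖ = (p : ℝ) ^ R}) /
      (μ.withDensity (fun x => ENNReal.ofReal (rho p σ b (n + 1) t x)))
        {x : Fin (n + 1) → ℚ_[p] | ‖Fin.tail x‖ = (p : ℝ) ^ R} =
    ENNReal.ofReal ((p : ℝ) ^ r *
      ((∑' j : {j : ℤ // j ≤ -R},
          (Real.exp (-(σ * t * (p : ℝ) ^ ((j.1 : ℝ) * b))) -
              Real.exp (-(σ * t * (p : ℝ) ^ (((j.1 : ℝ) + 1) * b)))) *
            (p : ℝ) ^ (((n : ℤ) + 1) * j.1)) /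
        (∑' j : {j : ℤ // j ≤ -R},
          (Real.exp (-(σ * t * (p : ℝ) ^ ((j.1 : ℝ) * b))) -
              Real.exp (-(σ * t * (p : ℝ) ^ (((j.1 : ℝ) + 1) * b)))) *
            (p : ℝ) ^ ((n : ℤ) * j.1)))) := by
  have hp : 1 < p := (Fact.out : p.Prime).one_lt
  have hσt : 0 < σ * t := mul_pos hσ ht
  obtain ⟨K, hK0, hKtop, hK⟩ := Padic.exists_addHaar_ball_tail_sphere (by omega) μ R
  rw [withDensity_rho_ball_inter_tail_norm_eq μ hrR ha, hK,
    withDensity_rho_tail_norm_eq hσt hb (by omega) μ R (hK 0), ← mul_assoc,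
    ENNReal.mul_div_mul_right _ _ hK0 hKtop,
    ← ENNReal.ofReal_mul (tsum_rhoWeight_mul_zpow_pos hp hσt hb (by omega) (-R)).le,
    ← ENNReal.ofReal_div_of_pos (tsum_rhoWeight_mul_zpow_pos hp hσt hb (by omega) (-R))]
  congr 1
  unfold rhoWeight
  push_cast
  ring

/-- Conditional probability for the max-norm Brownian motion at time `t` in dimension
`d = n+1 ≥ 2`: given that the last `n` coordinates lie on the sphere `S_{d−1}(R)`, the
probability that the first coordinate lies in `B(r,a)` (with `r ≤ R`, `a ∈ B(R)`) is
`p^r · G(R,d,t)/G(R,d−1,t)`, where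
`G(R,k,t) = Σ_{j ≤ −R}(e^{−σt p^{jb}} − e^{−σt p^{(j+1)b}}) p^{kj}`. -/
theorem conditional_component_probability (p : ℕ) [Fact p.Prime] (σ b t : ℝ)
    (hσ : 0 < σ) (hb : 0 < b) (ht : 0 < t) (n : ℕ) (hn : 1 ≤ n) (r R : ℤ) (hrR : r ≤ R)
    (a : ℚ_[p]) (ha : ‖a‖ ≤ (p : ℝ) ^ R)
    (μ : Measure (Fin (n + 1) → ℚ_[p])) [μ.IsAddHaarMeasure]
    (hμ : μ (closedBall (0 : Fin (n + 1) → ℚ_[p]) 1) = 1) :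
    (μ.withDensity (fun x => ENNReal.ofReal (rho p σ b (n + 1) t x)))
        ({x : Fin (n + 1) → ℚ_[p] | ‖x 0 - a‖ ≤ (p : ℝ) ^ r} ∩
          {x : Fin (n + 1) → ℚ_[p] | ‖Fin.tail x‖ = (p : ℝ) ^ R}) /
      (μ.withDensity (fun x => ENNReal.ofReal (rho p σ b (n + 1) t x)))
        {x : Fin (n + 1) → ℚ_[p] | ‖Fin.tail x‖ = (p : ℝ) ^ R} =
    ENNReal.ofReal ((p : ℝ) ^ r *
      ((∑' j : {j : ℤ // j ≤ -R},
          (Real.exp (-(σ * t * (p : ℝ) ^ ((j.1 : ℝ) * b))) -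
              Real.exp (-(σ * t * (p : ℝ) ^ (((j.1 : ℝ) + 1) * b)))) *
            (p : ℝ) ^ (((n : ℤ) + 1) * j.1)) /
        (∑' j : {j : ℤ // j ≤ -R},
          (Real.exp (-(σ * t * (p : ℝ) ^ ((j.1 : ℝ) * b))) -
              Real.exp (-(σ * t * (p : ℝ) ^ (((j.1 : ℝ) + 1) * b)))) *
            (p : ℝ) ^ ((n : ℤ) * j.1)))) :=
  conditional_component_probability_general p σ b t hσ hb ht n hn r R hrR a ha μ
end

section
/- For a prime p, b > 0, σ > 0, d ≥ 1, and an integer R, let G(R,d,t) = Σ_{j ≤ −R} (e^{−σt p^{jb}} − e^{−σt p^{(j+1)b}}) p^{dj}. Then G(R,d,·) is differentiable at 0 with derivative G'(R,d,0) = σ(p^b − 1) p^{(b+d)(1−R)} / (p^{b+d} − 1). -/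
/-!
Each summand is an entire function of `t` whose derivative at `0` is `σ (p^b - 1) p^{(b+d) j}`.
For `j ≤ -R` both `p^{jb}` and `p^{(j+1)b}` are at most `p^{(1-R)b}`, so on `|t| < 1` the
derivatives of the summands are bounded by a constant times `p^{(b+d) j}`. This geometric series
converges, so the series may be differentiated termwise, and the derivative at `0` is
`σ (p^b - 1) ∑_{j ≤ -R} p^{(b+d) j} = σ (p^b - 1) p^{(b+d)(1-R)} / (p^{b+d} - 1)`.
-/

open MeasureTheory Metric Real Filter Topology

/-- `G(R,k,t) = Σ_{j ≤ −R} (e^{−σt p^{jb}} − e^{−σt p^{(j+1)b}}) p^{kj}`. -/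
noncomputable def G (p : ℕ) (σ b : ℝ) (R k : ℤ) (t : ℝ) : ℝ :=
  ∑' j : {j : ℤ // j ≤ -R},
    (Real.exp (-(σ * t * (p : ℝ) ^ ((j.1 : ℝ) * b))) -
        Real.exp (-(σ * t * (p : ℝ) ^ (((j.1 : ℝ) + 1) * b)))) *
      (p : ℝ) ^ (k * j.1)

def Int.equivNatLE (N : ℤ) : ℕ ≃ {j : ℤ // j ≤ N} where
  toFun n := ⟨N - n, by omega⟩
  invFun j := (N - j.1).toNat
  left_inv n := by simp
  right_inv j := Subtype.ext (by have := j.2; simp; omega)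

theorem hasSum_zpow_of_le {𝕜 : Type*} [NormedField 𝕜] [CompleteSpace 𝕜] {r : 𝕜}
    (hr : 1 < ‖r‖) (N : ℤ) :
    HasSum (fun j : {j : ℤ // j ≤ N} => r ^ (j : ℤ)) (r ^ (N + 1) / (r - 1)) := by
  have hr0 : r ≠ 0 := norm_pos_iff.mp (one_pos.trans hr)
  have hgeom := (hasSum_geometric_of_norm_lt_one (ξ := r⁻¹)
    (by rw [norm_inv]; exact inv_lt_one_of_one_lt₀ hr)).mul_left (r ^ N)
  have hterm : (fun j : {j : ℤ // j ≤ N} => r ^ (j : ℤ)) ∘ Int.equivNatLE N =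
      fun n : ℕ => r ^ N * r⁻¹ ^ n := funext fun n => by
    simp [Int.equivNatLE, zpow_sub₀ hr0, div_eq_mul_inv]
  have hval : r ^ N * (1 - r⁻¹)⁻¹ = r ^ (N + 1) / (r - 1) := by
    rw [zpow_add_one₀ hr0]
    field_simp
  rw [← (Int.equivNatLE N).hasSum_iff, hterm, ← hval]
  exact hgeom

theorem hasDerivAt_exp_neg_mul_sub_mul (σ a a' w t : ℝ) :
    HasDerivAt (fun t => (exp (-(σ * t * a)) - exp (-(σ * t * a'))) * w)
      ((σ * a' * exp (-(σ * t * a')) - σ * a * exp (-(σ * t * a))) * w) t := by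
  have hexp (c : ℝ) :
      HasDerivAt (fun t => exp (-(σ * t * c))) (-(σ * c) * exp (-(σ * t * c))) t := by
    simpa [mul_comm] using (((hasDerivAt_id t).const_mul σ).mul_const c).neg.exp
  exact (((hexp a).fun_sub (hexp a')).mul_const w).congr_deriv (by ring)

theorem abs_mul_exp_neg_mul_le {σ a M t : ℝ} (ha : 0 ≤ a) (haM : a ≤ M) (ht : |t| ≤ 1) :
    |σ * a * exp (-(σ * t * a))| ≤ |σ| * exp (|σ| * M) * a := by
  have hexp : -(σ * t * a) ≤ |σ| * M :=
    calc -(σ * t * a) ≤ |σ * t * a| := neg_le_abs _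
      _ = |σ| * |t| * a := by rw [abs_mul, abs_mul, abs_of_nonneg ha]
      _ ≤ |σ| * 1 * M := by gcongr
      _ = |σ| * M := by ring
  rw [abs_mul, abs_mul, abs_of_nonneg ha, abs_of_pos (exp_pos _)]
  calc |σ| * a * exp (-(σ * t * a)) = |σ| * exp (-(σ * t * a)) * a := by ring
    _ ≤ |σ| * exp (|σ| * M) * a := by gcongr

theorem abs_deriv_exp_neg_mul_sub_mul_le {σ a a' w M t : ℝ} (ha : 0 ≤ a) (haM : a ≤ M)
    (ha' : 0 ≤ a') (ha'M : a' ≤ M) (hw : 0 ≤ w) (ht : |t| ≤ 1) :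
    |(σ * a' * exp (-(σ * t * a')) - σ * a * exp (-(σ * t * a))) * w| ≤
      |σ| * exp (|σ| * M) * (a' * w + a * w) := by
  rw [abs_mul, abs_of_nonneg hw]
  have hbound := (abs_sub _ _).trans (add_le_add (abs_mul_exp_neg_mul_le (σ := σ) ha' ha'M ht)
    (abs_mul_exp_neg_mul_le (σ := σ) ha haM ht))
  calc _ ≤ (|σ| * exp (|σ| * M) * a' + |σ| * exp (|σ| * M) * a) * w := by gcongr
    _ = _ := by ring

theorem rpow_mul_mul_zpow_mul {x : ℝ} (hx : 0 < x) (b : ℝ) (k j : ℤ) :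
    x ^ ((j : ℝ) * b) * x ^ (k * j) = (x ^ (b + k)) ^ j := by
  rw [← rpow_intCast, ← rpow_add hx, ← rpow_intCast, ← rpow_mul hx.le]
  push_cast
  ring_nf

theorem rpow_add_one_mul {x : ℝ} (hx : 0 < x) (j b : ℝ) :
    x ^ ((j + 1) * b) = x ^ b * x ^ (j * b) := by
  rw [← rpow_add hx]; ring_nf

theorem abs_deriv_G_summand_le {x : ℝ} (hx : 1 < x) (σ : ℝ) {b : ℝ} (hb : 0 ≤ b) (k : ℤ)
    {j N : ℤ} (hj : j ≤ N) {t : ℝ} (ht : |t| ≤ 1) :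
    |(σ * x ^ (((j : ℝ) + 1) * b) * exp (-(σ * t * x ^ (((j : ℝ) + 1) * b))) -
        σ * x ^ ((j : ℝ) * b) * exp (-(σ * t * x ^ ((j : ℝ) * b)))) * x ^ (k * j)| ≤
      |σ| * exp (|σ| * x ^ (((N : ℝ) + 1) * b)) * (x ^ b + 1) * (x ^ (b + k)) ^ j := by
  have hx0 : 0 < x := one_pos.trans hx
  have hj' : (j : ℝ) ≤ N := by exact_mod_cast hj
  have hBM : x ^ (((j : ℝ) + 1) * b) ≤ x ^ (((N : ℝ) + 1) * b) :=
    rpow_le_rpow_of_exponent_le hx.le (by nlinarith)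
  have hAB : x ^ ((j : ℝ) * b) ≤ x ^ (((j : ℝ) + 1) * b) :=
    rpow_le_rpow_of_exponent_le hx.le (by nlinarith)
  refine (abs_deriv_exp_neg_mul_sub_mul_le (by positivity) (hAB.trans hBM)
    (by positivity) hBM (by positivity) ht).trans_eq ?_
  rw [rpow_add_one_mul hx0 j, mul_assoc (x ^ b), rpow_mul_mul_zpow_mul hx0]
  ring

theorem hasDerivAt_G_zero {p : ℕ} (hp : 1 < p) (σ : ℝ) {b : ℝ} (hb : 0 ≤ b) (R k : ℤ)
    (hbk : 0 < b + k) :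
    HasDerivAt (G p σ b R k)
      (σ * ((p : ℝ) ^ b - 1) * ((p : ℝ) ^ (b + k)) ^ (1 - R) /
        ((p : ℝ) ^ (b + k) - 1)) 0 := by
  set x : ℝ := (p : ℝ)
  have hx : 1 < x := Nat.one_lt_cast.mpr hp
  have hx0 : 0 < x := one_pos.trans hx
  set r := x ^ (b + k)
  have hr : 1 < ‖r‖ := by rw [norm_of_nonneg (rpow_nonneg hx0.le _)]; exact one_lt_rpow hx hbk
  have hgeom : HasSum (fun j : {j : ℤ // j ≤ -R} => r ^ (j : ℤ)) (r ^ (1 - R) / (r - 1)) := by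
    simpa [neg_add_eq_sub] using hasSum_zpow_of_le hr (-R)
  have h0 : (0 : ℝ) ∈ Set.Ioo (-1) 1 := by norm_num
  have hderiv := hasDerivAt_tsum_of_isPreconnected
    (g := fun (j : {j : ℤ // j ≤ -R}) t =>
      (exp (-(σ * t * x ^ ((j : ℝ) * b))) - exp (-(σ * t * x ^ (((j : ℝ) + 1) * b)))) *
        x ^ (k * j))
    (u := fun j : {j : ℤ // j ≤ -R} =>
      |σ| * exp (|σ| * x ^ ((((-R : ℤ) : ℝ) + 1) * b)) * (x ^ b + 1) * r ^ (j : ℤ))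
    (hgeom.summable.mul_left _) isOpen_Ioo isPreconnected_Ioo
    (fun j t _ => hasDerivAt_exp_neg_mul_sub_mul _ _ _ _ t)
    (fun j t ht => abs_deriv_G_summand_le hx σ hb k j.2 (abs_le.mpr ⟨ht.1.le, ht.2.le⟩))
    h0 (by simp) h0
  refine hderiv.congr_deriv ?_
  have hterm (j : ℤ) :
      (σ * x ^ (((j : ℝ) + 1) * b) * exp (-(σ * 0 * x ^ (((j : ℝ) + 1) * b))) -
        σ * x ^ ((j : ℝ) * b) * exp (-(σ * 0 * x ^ ((j : ℝ) * b)))) * x ^ (k * j) =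
        σ * (x ^ b - 1) * r ^ j := by
    rw [← rpow_mul_mul_zpow_mul hx0, rpow_add_one_mul hx0]
    simp only [mul_zero, zero_mul, neg_zero, exp_zero]
    ring
  simp only [hterm, tsum_mul_left, hgeom.tsum_eq, mul_div_assoc]

theorem G_hasDerivAt_zero_general (p : ℕ) (hp : p.Prime) (σ b : ℝ) (hb : 0 < b)
    (d : ℕ) (R : ℤ) :
    HasDerivWithinAt (G p σ b R (d : ℤ))
      (σ * ((p : ℝ) ^ b - 1) * (p : ℝ) ^ ((b + (d : ℝ)) * (1 - (R : ℝ))) /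
        ((p : ℝ) ^ (b + (d : ℝ)) - 1))
      (Set.Ici (0 : ℝ)) 0 := by
  have h := hasDerivAt_G_zero hp.one_lt σ hb.le R d (by positivity)
  rw [Int.cast_natCast, ← rpow_intCast, ← rpow_mul (Nat.cast_nonneg p)] at h
  push_cast at h
  exact h.hasDerivWithinAt

/-- `G(R,d,·)` is (right-)differentiable at `0` with derivative
`σ(p^b − 1) p^{(b+d)(1−R)} / (p^{b+d} − 1)`. -/
theorem G_hasDerivAt_zero (p : ℕ) (hp : p.Prime) (σ b : ℝ) (hσ : 0 < σ) (hb : 0 < b)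
    (d : ℕ) (hd : 1 ≤ d) (R : ℤ) :
    HasDerivWithinAt (G p σ b R (d : ℤ))
      (σ * ((p : ℝ) ^ b - 1) * (p : ℝ) ^ ((b + (d : ℝ)) * (1 - (R : ℝ))) /
        ((p : ℝ) ^ (b + (d : ℝ)) - 1))
      (Set.Ici (0 : ℝ)) 0 :=
  G_hasDerivAt_zero_general p hp σ b hb d R
end

section
/- Let B(t) = e^{−σt p^{−Rb}} + p^{dR} Σ_{j < −R} (e^{−σt p^{jb}} − e^{−σt p^{(j+1)b}}) p^{dj} for t ≥ 0, with p prime, σ, b > 0, d ≥ 1, R ∈ ℤ. Then B is differentiable at 0 with B'(0) = −σ α_d p^{−Rb}, where α_d = 1 − (p^b − 1)/(p^{b+d} − 1). -/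
/-!
The `j`-th term `t ↦ (e^{-σ t u} - e^{-σ t v}) p^{dj}` of the series, with
`u = p^{jb} ≤ v = p^{(j+1)b}`, vanishes at `0` and has derivative `σ (v - u) p^{dj}` there; since
`x ↦ e^{-x}` is `1`-Lipschitz on `[0, ∞)`, its difference quotients on `t > 0` are bounded by
that same number. These bounds are `σ (p^b - 1) (p^{b+d})^j`, a geometric series over `j < -R`,
so dominated convergence (Tannery's theorem) lets us differentiate term by term, and summing the
geometric series produces `α_d`.
-/

open Real Topology

theorem hasDerivAt_exp_neg_mul (σ a : ℝ) :
    HasDerivAt (fun t => exp (-(σ * t * a))) (-(σ * a)) 0 := by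
  simpa using ((((hasDerivAt_id (0 : ℝ)).const_mul σ).mul_const a).neg).exp

theorem hasDerivAt_exp_neg_sub_mul (σ a b C : ℝ) :
    HasDerivAt (fun t => (exp (-(σ * t * a)) - exp (-(σ * t * b))) * C) (σ * (b - a) * C) 0 :=
  (((hasDerivAt_exp_neg_mul σ a).sub (hasDerivAt_exp_neg_mul σ b)).mul_const C).congr_deriv
    (by ring)

theorem exp_neg_sub_exp_neg_le {x y : ℝ} (hx : 0 ≤ x) (hxy : x ≤ y) :
    exp (-x) - exp (-y) ≤ y - x := by
  have hx_exp : exp (-x) ≤ 1 := exp_le_one_iff.mpr (by linarith)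
  have hgap_le : 1 - exp (x - y) ≤ y - x := by linarith [add_one_le_exp (x - y)]
  have hgap_nonneg : 0 ≤ 1 - exp (x - y) :=
    sub_nonneg.mpr (exp_le_one_iff.mpr (by linarith))
  calc exp (-x) - exp (-y) = exp (-x) * (1 - exp (x - y)) := by
        rw [mul_sub, ← exp_add]; ring_nf
    _ ≤ 1 * (y - x) := mul_le_mul hx_exp hgap_le hgap_nonneg zero_le_one
    _ = y - x := one_mul _

theorem norm_slope_exp_neg_sub_mul_le {σ a b C t : ℝ} (hσ : 0 ≤ σ) (ha : 0 ≤ a) (hab : a ≤ b)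
    (hC : 0 ≤ C) (ht : 0 < t) :
    ‖slope (fun t => (exp (-(σ * t * a)) - exp (-(σ * t * b))) * C) 0 t‖ ≤ σ * (b - a) * C := by
  have hx : 0 ≤ σ * t * a := by positivity
  have hxy : σ * t * a ≤ σ * t * b := mul_le_mul_of_nonneg_left hab (by positivity)
  have hdiff : 0 ≤ exp (-(σ * t * a)) - exp (-(σ * t * b)) :=
    sub_nonneg.mpr (exp_le_exp.mpr (neg_le_neg hxy))
  have hslope : slope (fun t => (exp (-(σ * t * a)) - exp (-(σ * t * b))) * C) 0 t =
      (exp (-(σ * t * a)) - exp (-(σ * t * b))) * C / t := by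
    simp [slope_def_field]
  rw [hslope, Real.norm_eq_abs, abs_of_nonneg (div_nonneg (mul_nonneg hdiff hC) ht.le),
    div_le_iff₀ ht]
  calc (exp (-(σ * t * a)) - exp (-(σ * t * b))) * C
      ≤ (σ * t * b - σ * t * a) * C :=
        mul_le_mul_of_nonneg_right (exp_neg_sub_exp_neg_le hx hxy) hC
    _ = σ * (b - a) * C * t := by ring

theorem hasDerivWithinAt_tsum_of_norm_slope_le {ι 𝕜 F : Type*} [NontriviallyNormedField 𝕜]
    [NormedAddCommGroup F] [NormedSpace 𝕜 F] [CompleteSpace F]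
    {f : ι → 𝕜 → F} {f' : ι → F} {g : ι → ℝ} {s : Set 𝕜} {x : 𝕜}
    (hf : ∀ i, HasDerivWithinAt (f i) (f' i) s x) (hfx : Summable fun i => f i x)
    (hg : Summable g) (hslope : ∀ᶠ t in 𝓝[s \ {x}] x, ∀ i, ‖slope (f i) x t‖ ≤ g i) :
    HasDerivWithinAt (fun t => ∑' i, f i t) (∑' i, f' i) s x := by
  rw [hasDerivWithinAt_iff_tendsto_slope]
  refine (tendsto_tsum_of_dominated_convergence hg
    (fun i => hasDerivWithinAt_iff_tendsto_slope.mp (hf i)) hslope).congr' ?_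
  filter_upwards [hslope] with t ht
  have hsum_slope : Summable fun i => slope (f i) x t := .of_norm_bounded hg ht
  have hsum_t : Summable fun i => f i t :=
    ((hsum_slope.const_smul (t - x)).add hfx).congr fun i => sub_smul_slope_vadd (f i) x t
  rw [slope_def_module, ← hsum_t.tsum_sub hfx, ← tsum_const_smul'']
  rfl

def natEquivLT (R : ℤ) : ℕ ≃ {j : ℤ // j < R} where
  toFun n := ⟨R - 1 - n, by omega⟩
  invFun j := (R - 1 - j.1).toNat
  left_inv n := by simp
  right_inv j := Subtype.ext (by have := j.2; dsimp only; omega)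

theorem hasSum_zpow_lt {x : ℝ} (hx : 1 < x) (R : ℤ) :
    HasSum (fun j : {j : ℤ // j < R} => x ^ (j : ℤ)) (x ^ R / (x - 1)) := by
  have hx0' : 0 < x := zero_lt_one.trans hx
  have hx0 : x ≠ 0 := hx0'.ne'
  have hterm : ∀ n : ℕ, x ^ (natEquivLT R n : ℤ) = x ^ (R - 1) * x⁻¹ ^ n := fun n => by
    simp [natEquivLT, zpow_sub₀ hx0, div_eq_mul_inv]
  have hvalue : x ^ R / (x - 1) = x ^ (R - 1) * (1 - x⁻¹)⁻¹ := by
    rw [zpow_sub_one₀ hx0]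
    field_simp
  rw [← (natEquivLT R).hasSum_iff, hvalue, Function.comp_def]
  simp only [hterm]
  exact (hasSum_geometric_of_lt_one (inv_nonneg.mpr hx0'.le)
    (inv_lt_one_of_one_lt₀ hx)).mul_left _

theorem rpow_add_one_mul_sub_rpow_mul_mul_zpow {q : ℝ} (hq : 0 < q) (b : ℝ) (d : ℕ) (j : ℤ) :
    (q ^ (((j : ℝ) + 1) * b) - q ^ ((j : ℝ) * b)) * q ^ ((d : ℤ) * j) =
      (q ^ b - 1) * (q ^ (b + d)) ^ j := by
  rw [← rpow_intCast (q ^ (b + d)), ← rpow_mul hq.le, ← rpow_intCast q, sub_mul, sub_mul,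
    one_mul, ← rpow_add hq, ← rpow_add hq, ← rpow_add hq]
  push_cast
  ring_nf

theorem survival_hasDerivAt_zero_general (p : ℕ) (hp : p.Prime) (σ b : ℝ) (hσ : 0 < σ)
    (hb : 0 < b) (d : ℕ) (R : ℤ) :
    HasDerivWithinAt
      (fun t : ℝ =>
        Real.exp (-(σ * t * (p : ℝ) ^ (-(R : ℝ) * b))) +
          (p : ℝ) ^ ((d : ℤ) * R) *
            ∑' j : {j : ℤ // j < -R},
              (Real.exp (-(σ * t * (p : ℝ) ^ ((j.1 : ℝ) * b))) -
                  Real.exp (-(σ * t * (p : ℝ) ^ (((j.1 : ℝ) + 1) * b)))) *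
                (p : ℝ) ^ ((d : ℤ) * j.1))
      (-(σ * (1 - ((p : ℝ) ^ b - 1) / ((p : ℝ) ^ (b + (d : ℝ)) - 1)) *
          (p : ℝ) ^ (-(R : ℝ) * b)))
      (Set.Ici (0 : ℝ)) 0 := by
  have hp1 : 1 < (p : ℝ) := by exact_mod_cast hp.one_lt
  have hp0 : 0 < (p : ℝ) := zero_lt_one.trans hp1
  have hpc : 1 < (p : ℝ) ^ (b + d) := one_lt_rpow hp1 (by positivity)
  have hderivs : HasSum (fun j : {j : ℤ // j < -R} =>
      σ * ((p : ℝ) ^ (((j : ℝ) + 1) * b) - (p : ℝ) ^ ((j : ℝ) * b)) * (p : ℝ) ^ ((d : ℤ) * j))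
      (σ * ((p : ℝ) ^ b - 1) * (((p : ℝ) ^ (b + d)) ^ (-R) / ((p : ℝ) ^ (b + d) - 1))) := by
    refine ((hasSum_zpow_lt hpc (-R)).mul_left (σ * ((p : ℝ) ^ b - 1))).congr_fun fun j => ?_
    rw [mul_assoc, rpow_add_one_mul_sub_rpow_mul_mul_zpow hp0, mul_assoc]
  have hseries := hasDerivWithinAt_tsum_of_norm_slope_le (s := Set.Ici 0)
    (fun j => (hasDerivAt_exp_neg_sub_mul σ _ _ _).hasDerivWithinAt) (by simp) hderivs.summable
    (by
      filter_upwards [self_mem_nhdsWithin] with t ⟨ht, htne⟩ j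
      exact norm_slope_exp_neg_sub_mul_le hσ.le (by positivity)
        (rpow_le_rpow_of_exponent_le hp1.le (by nlinarith)) (by positivity)
        (lt_of_le_of_ne ht (Ne.symm htne)))
  refine ((hasDerivAt_exp_neg_mul σ _).hasDerivWithinAt.add (hseries.const_mul _)).congr_deriv ?_
  have hscale :
      (p : ℝ) ^ ((d : ℤ) * R) * ((p : ℝ) ^ (b + d)) ^ (-R) = (p : ℝ) ^ (-(R : ℝ) * b) := by
    rw [← rpow_intCast, ← rpow_intCast, ← rpow_mul hp0.le, ← rpow_add hp0]
    push_cast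
    ring_nf
  rw [hderivs.tsum_eq, ← hscale]
  field_simp
  ring

/-- The survival-probability function
`B(t) = e^{−σt p^{−Rb}} + p^{dR} Σ_{j < −R} (e^{−σt p^{jb}} − e^{−σt p^{(j+1)b}}) p^{dj}`
is (right-)differentiable at `0` with `B'(0) = −σ α_d p^{−Rb}`, where
`α_d = 1 − (p^b − 1)/(p^{b+d} − 1)`. -/
theorem survival_hasDerivAt_zero (p : ℕ) (hp : p.Prime) (σ b : ℝ) (hσ : 0 < σ)
    (hb : 0 < b) (d : ℕ) (hd : 1 ≤ d) (R : ℤ) :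
    HasDerivWithinAt
      (fun t : ℝ =>
        Real.exp (-(σ * t * (p : ℝ) ^ (-(R : ℝ) * b))) +
          (p : ℝ) ^ ((d : ℤ) * R) *
            ∑' j : {j : ℤ // j < -R},
              (Real.exp (-(σ * t * (p : ℝ) ^ ((j.1 : ℝ) * b))) -
                  Real.exp (-(σ * t * (p : ℝ) ^ (((j.1 : ℝ) + 1) * b)))) *
                (p : ℝ) ^ ((d : ℤ) * j.1))
      (-(σ * (1 - ((p : ℝ) ^ b - 1) / ((p : ℝ) ^ (b + (d : ℝ)) - 1)) *
          (p : ℝ) ^ (-(R : ℝ) * b)))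
      (Set.Ici (0 : ℝ)) 0 :=
  survival_hasDerivAt_zero_general p hp σ b hσ hb d R
end
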